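/- arXiv:1912.06611 — 3 statements merged into one kernel-verified Lean document; each statement's English description precedes it below -/
import Mathlib

section
/- The sequence (b_n/a_n) converges to ζ(3); that is, the sequence of rational numbers b_n/a_n has limit ∑_{m=1}^∞ 1/m³. -/
/-- ζ(3), the sum of the series ∑_{m=1}^∞ 1/m³. -/
noncomputable def zeta3 : ℝ := ∑' m : ℕ, 1 / ((m : ℝ) + 1) ^ 3

/-- `z n = ∑_{m=1}^n 1/m³`. -/
noncomputable def zseq (n : ℕ) : ℝ := ∑ m ∈ Finset.Icc 1 n, 1 / (m : ℝ) ^ 3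

/-- `a n = ∑_{k=0}^n C(n,k)² C(n+k,k)²`. -/
noncomputable def aseq (n : ℕ) : ℝ :=
  ∑ k ∈ Finset.range (n + 1), (n.choose k : ℝ) ^ 2 * ((n + k).choose k : ℝ) ^ 2

/-- `b n = a n * z n + ∑_{k=1}^n ∑_{m=1}^k (-1)^{m+1} C(n,k)² C(n+k,k)²
      / (2 m³ C(n,m) C(n+m,m))`. -/
noncomputable def bseq (n : ℕ) : ℝ :=
  aseq n * zseq n +
    ∑ k ∈ Finset.Icc 1 n, ∑ m ∈ Finset.Icc 1 k,
      (-1 : ℝ) ^ (m + 1) * (n.choose k : ℝ) ^ 2 * ((n + k).choose k : ℝ) ^ 2 /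
        (2 * (m : ℝ) ^ 3 * (n.choose m : ℝ) * ((n + m).choose m : ℝ))

/-!
Writing `a n = ∑ₖ wₖ` with `wₖ = C(n,k)² C(n+k,k)² ≥ 0`, the difference `b n - a n z n` is a
`wₖ`-weighted sum of inner sums whose `m`-th term is at most `1 / (2 m³ (n + 1))` in absolute
value, because `C(n,m) ≥ 1` and `C(n+m,m) ≥ n + 1`. Hence `|b n / a n - z n| ≤ ζ(3) / (2 (n + 1))`,
and `b n / a n` has the same limit `ζ(3)` as the partial sums `z n`.
-/

open Filter Finset Topology

theorem Nat.succ_le_add_choose {n m : ℕ} (hm : 1 ≤ m) : n + 1 ≤ (n + m).choose m := by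
  rw [← Nat.choose_symm_add]
  calc n + 1 = (n + 1).choose n := (Nat.choose_succ_self_right n).symm
    _ ≤ (n + m).choose n := Nat.choose_le_choose n (by omega)

theorem summable_one_div_succ_pow_three : Summable fun m : ℕ => 1 / ((m : ℝ) + 1) ^ 3 := by
  have h := (summable_nat_add_iff 1).mpr <|
    Real.summable_one_div_nat_pow.mpr (by norm_num : 1 < 3)
  exact h.congr fun m => by push_cast; rfl

theorem zseq_eq_sum_range (n : ℕ) : zseq n = ∑ i ∈ range n, 1 / ((i : ℝ) + 1) ^ 3 := by
  rw [zseq, ← Finset.Ico_add_one_right_eq_Icc, Finset.sum_Ico_eq_sum_range]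
  refine sum_congr rfl fun i _ => ?_
  push_cast
  ring_nf

theorem tendsto_zseq : Tendsto zseq atTop (𝓝 zeta3) :=
  summable_one_div_succ_pow_three.hasSum.tendsto_sum_nat.congr fun n => (zseq_eq_sum_range n).symm

theorem zseq_le_zeta3 (n : ℕ) : zseq n ≤ zeta3 := by
  rw [zseq_eq_sum_range, zeta3]
  exact summable_one_div_succ_pow_three.sum_le_tsum _ fun i _ => by positivity

theorem zeta3_nonneg : 0 ≤ zeta3 :=
  tsum_nonneg fun _ => by positivity

theorem one_le_aseq (n : ℕ) : 1 ≤ aseq n := by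
  have h := single_le_sum (f := fun k => (n.choose k : ℝ) ^ 2 * ((n + k).choose k : ℝ) ^ 2)
    (fun _ _ => by positivity) (mem_range.mpr n.succ_pos)
  simpa [aseq] using h

theorem abs_neg_one_pow_mul_div_choose_le {n m : ℕ} (hm : 1 ≤ m) (hmn : m ≤ n) (j : ℕ)
    (x y : ℝ) :
    |(-1 : ℝ) ^ j * x ^ 2 * y ^ 2 /
        (2 * (m : ℝ) ^ 3 * (n.choose m : ℝ) * ((n + m).choose m : ℝ))| ≤
      x ^ 2 * y ^ 2 / (2 * ((n : ℝ) + 1)) * (1 / (m : ℝ) ^ 3) := by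
  have hc : (1 : ℝ) ≤ n.choose m := by exact_mod_cast Nat.choose_pos hmn
  have hd : (n : ℝ) + 1 ≤ (n + m).choose m := by exact_mod_cast Nat.succ_le_add_choose hm
  simp only [abs_div, abs_mul, abs_pow, abs_neg, abs_one, one_pow, one_mul, Nat.abs_cast,
    abs_two, sq_abs]
  rw [div_mul_div_comm, mul_one]
  apply div_le_div_of_nonneg_left (by positivity) (by positivity)
  calc 2 * ((n : ℝ) + 1) * (m : ℝ) ^ 3 = 2 * (m : ℝ) ^ 3 * 1 * ((n : ℝ) + 1) := by ring
    _ ≤ 2 * (m : ℝ) ^ 3 * (n.choose m : ℝ) * ((n + m).choose m : ℝ) := by gcongr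

theorem abs_sum_neg_one_pow_mul_div_choose_le {n k : ℕ} (hkn : k ≤ n) (x y : ℝ) :
    |∑ m ∈ Icc 1 k, (-1 : ℝ) ^ (m + 1) * x ^ 2 * y ^ 2 /
        (2 * (m : ℝ) ^ 3 * (n.choose m : ℝ) * ((n + m).choose m : ℝ))| ≤
      x ^ 2 * y ^ 2 * (zeta3 / (2 * ((n : ℝ) + 1))) := by
  calc _ ≤ ∑ m ∈ Icc 1 k, |(-1 : ℝ) ^ (m + 1) * x ^ 2 * y ^ 2 /
          (2 * (m : ℝ) ^ 3 * (n.choose m : ℝ) * ((n + m).choose m : ℝ))| :=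
        abs_sum_le_sum_abs _ _
    _ ≤ ∑ m ∈ Icc 1 k, x ^ 2 * y ^ 2 / (2 * ((n : ℝ) + 1)) * (1 / (m : ℝ) ^ 3) :=
        sum_le_sum fun m hm => by
          rw [mem_Icc] at hm
          exact abs_neg_one_pow_mul_div_choose_le hm.1 (hm.2.trans hkn) _ x y
    _ = x ^ 2 * y ^ 2 / (2 * ((n : ℝ) + 1)) * zseq k := by rw [zseq, mul_sum]
    _ ≤ x ^ 2 * y ^ 2 / (2 * ((n : ℝ) + 1)) * zeta3 := by gcongr; exact zseq_le_zeta3 k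
    _ = _ := by ring

theorem abs_bseq_sub_aseq_mul_zseq_le (n : ℕ) :
    |bseq n - aseq n * zseq n| ≤ aseq n * (zeta3 / (2 * ((n : ℝ) + 1))) := by
  rw [bseq, add_sub_cancel_left, aseq, sum_mul]
  calc _ ≤ ∑ k ∈ Icc 1 n, |∑ m ∈ Icc 1 k, (-1 : ℝ) ^ (m + 1) * (n.choose k : ℝ) ^ 2 *
          ((n + k).choose k : ℝ) ^ 2 /
            (2 * (m : ℝ) ^ 3 * (n.choose m : ℝ) * ((n + m).choose m : ℝ))| :=
        abs_sum_le_sum_abs _ _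
    _ ≤ ∑ k ∈ Icc 1 n, (n.choose k : ℝ) ^ 2 * ((n + k).choose k : ℝ) ^ 2 *
          (zeta3 / (2 * ((n : ℝ) + 1))) :=
        sum_le_sum fun k hk => abs_sum_neg_one_pow_mul_div_choose_le (mem_Icc.mp hk).2 _ _
    _ ≤ _ := by
      have := zeta3_nonneg
      refine sum_le_sum_of_subset_of_nonneg (fun k hk => ?_) fun _ _ _ => by positivity
      rw [mem_Icc] at hk
      exact mem_range.mpr (by omega)

theorem abs_bseq_div_aseq_sub_zseq_le (n : ℕ) :
    |bseq n / aseq n - zseq n| ≤ zeta3 / (2 * ((n : ℝ) + 1)) := by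
  have ha : 0 < aseq n := one_pos.trans_le (one_le_aseq n)
  rw [← mul_div_cancel_left₀ (zseq n) ha.ne', ← sub_div, abs_div, abs_of_pos ha,
    div_le_iff₀' ha]
  exact abs_bseq_sub_aseq_mul_zseq_le n

/-- The sequence `b n / a n` converges to `ζ(3)`. -/
theorem b_over_a_tendsto_zeta3 :
    Filter.Tendsto (fun n : ℕ => bseq n / aseq n) Filter.atTop (nhds zeta3) := by
  have hbound : Tendsto (fun n : ℕ => zeta3 / (2 * ((n : ℝ) + 1))) atTop (𝓝 0) := by
    simpa using (tendsto_one_div_add_atTop_nhds_zero_nat.const_mul (zeta3 / 2)).congr fun n => by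
      field_simp
  have hdiff : Tendsto (fun n => bseq n / aseq n - zseq n) atTop (𝓝 0) :=
    squeeze_zero_norm (fun n => (Real.norm_eq_abs _).trans_le (abs_bseq_div_aseq_sub_zseq_le n))
      hbound
  simpa using tendsto_zseq.add hdiff
end

section
/- The sequence 33^n is O(a_n): there is a constant K > 0 such that 33^n ≤ K·a_n for all sufficiently large n. -/
def aperyTerm (n k : ℕ) : ℕ := n.choose k * (n + k).choose k

theorem aseq_eq_sum_sq (n : ℕ) :
    aseq n = ∑ k ∈ Finset.range (n + 1), (aperyTerm n k : ℝ) ^ 2 := by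
  simp only [aseq, aperyTerm, Nat.cast_mul, mul_pow]

theorem sq_aperyTerm_le_aseq {n k : ℕ} (hk : k ≤ n) : (aperyTerm n k : ℝ) ^ 2 ≤ aseq n := by
  rw [aseq_eq_sum_sq]
  exact Finset.single_le_sum (fun i _ => sq_nonneg (aperyTerm n i : ℝ))
    (Finset.mem_range_succ_iff.2 hk)

theorem aperyTerm_pos {n k : ℕ} (h : k ≤ n) : 0 < aperyTerm n k :=
  Nat.mul_pos (Nat.choose_pos h) (Nat.choose_pos (by omega))

theorem aperyTerm_succ_left (n k : ℕ) :
    (n + 1 - k) * aperyTerm (n + 1) k = (n + k + 1) * aperyTerm n k := by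
  have h₁ := Nat.choose_mul_succ_eq n k
  have h₂ := Nat.choose_mul_succ_eq (n + k) k
  rw [show n + k + 1 - k = n + 1 by omega, show n + k + 1 = n + 1 + k by omega] at h₂
  apply Nat.eq_of_mul_eq_mul_right n.succ_pos
  unfold aperyTerm
  calc (n + 1 - k) * ((n + 1).choose k * (n + 1 + k).choose k) * (n + 1)
      = ((n + 1).choose k * (n + 1 - k)) * ((n + 1 + k).choose k * (n + 1)) := by ring
    _ = (n.choose k * (n + 1)) * ((n + k).choose k * (n + 1 + k)) := by rw [h₁, h₂]
    _ = (n + k + 1) * (n.choose k * (n + k).choose k) * (n + 1) := by ring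

theorem aperyTerm_succ_succ (n k : ℕ) :
    (k + 1) ^ 2 * aperyTerm (n + 1) (k + 1) = (n + k + 1) * (n + k + 2) * aperyTerm n k := by
  have h₁ := Nat.add_one_mul_choose_eq n k
  have h₂ := Nat.add_one_mul_choose_eq (n + k + 1) k
  have h₃ := Nat.choose_mul_succ_eq (n + k) k
  rw [show n + k + 1 + 1 = n + 1 + (k + 1) by omega] at h₂
  rw [show n + k + 1 - k = n + 1 by omega] at h₃
  apply Nat.eq_of_mul_eq_mul_right n.succ_pos
  unfold aperyTerm
  calc (k + 1) ^ 2 * ((n + 1).choose (k + 1) * (n + 1 + (k + 1)).choose (k + 1)) * (n + 1)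
      = ((n + 1).choose (k + 1) * (k + 1)) * ((n + 1 + (k + 1)).choose (k + 1) * (k + 1))
          * (n + 1) := by ring
    _ = ((n + 1) * n.choose k) * ((n + 1 + (k + 1)) * (n + k + 1).choose k) * (n + 1) := by
      rw [← h₁, ← h₂]
    _ = (n + 1) * n.choose k * (n + k + 2) * ((n + k + 1).choose k * (n + 1)) := by ring
    _ = (n + 1) * n.choose k * (n + k + 2) * ((n + k).choose k * (n + k + 1)) := by rw [h₃]
    _ = (n + k + 1) * (n + k + 2) * (n.choose k * (n + k).choose k) * (n + 1) := by ring

theorem Nat.mul_pow_le_pow_of_mul_le {a b c p q m : ℕ} (hb : 0 < b) (hc : c * b ^ m ≤ a ^ m)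
    (h : a * p ≤ b * q) : c * p ^ m ≤ q ^ m := by
  refine Nat.le_of_mul_le_mul_right ?_ (pow_pos hb m)
  calc c * p ^ m * b ^ m = c * b ^ m * p ^ m := by ring
    _ ≤ a ^ m * p ^ m := Nat.mul_le_mul_right _ hc
    _ = (a * p) ^ m := (mul_pow a p m).symm
    _ ≤ (b * q) ^ m := Nat.pow_le_pow_left h m
    _ = q ^ m * b ^ m := by ring

theorem Nat.pow_mul_le_of_mul_le_succ {u : ℕ → ℕ} {c N : ℕ} (h : ∀ n ≥ N, c * u n ≤ u (n + 1))
    {n : ℕ} (hn : N ≤ n) : c ^ (n - N) * u N ≤ u n := by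
  induction n, hn using Nat.le_induction with
  | base => simp
  | succ n hn ih =>
    calc c ^ (n + 1 - N) * u N = c * (c ^ (n - N) * u N) := by
          rw [Nat.sub_add_comm hn, pow_succ]; ring
      _ ≤ c * u n := Nat.mul_le_mul_left c ih
      _ ≤ u (n + 1) := h n hn

def peakIndex (n : ℕ) : ℕ := 71 * n / 100

def peakTerm (n : ℕ) : ℕ := aperyTerm n (peakIndex n)

theorem peakIndex_le (n : ℕ) : peakIndex n ≤ n := by unfold peakIndex; omega

theorem peakTerm_pos (n : ℕ) : 0 < peakTerm n := aperyTerm_pos (peakIndex_le n)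

theorem thirtyThree_mul_sq_peakTerm_le {n : ℕ} (hn : 151 ≤ n) :
    33 * peakTerm n ^ 2 ≤ peakTerm (n + 1) ^ 2 := by
  unfold peakTerm
  set k := peakIndex n with hk
  have hkn : k ≤ n := peakIndex_le n
  obtain hstay | hstep : peakIndex (n + 1) = k ∨ peakIndex (n + 1) = k + 1 := by
    simp only [hk, peakIndex]; omega
  · rw [hstay]
    refine Nat.mul_pow_le_pow_of_mul_le (by omega) ?_ (aperyTerm_succ_left n k).ge
    -- `5.7446 > √33` and, below, `2.3969 > 33 ^ (1 / 4)`
    exact Nat.mul_pow_le_pow_of_mul_le (a := 57446) (b := 10000) (by norm_num) (by norm_num)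
      (by simp only [hk, peakIndex] at hstay ⊢; omega)
  · rw [hstep]
    refine Nat.mul_pow_le_pow_of_mul_le (by positivity) ?_ (aperyTerm_succ_succ n k).ge
    have h4 : 33 * (k + 1) ^ 4 ≤ (n + k + 1) ^ 4 :=
      Nat.mul_pow_le_pow_of_mul_le (a := 23969) (b := 10000) (by norm_num) (by norm_num)
        (by simp only [hk, peakIndex] at hstep ⊢; omega)
    calc 33 * ((k + 1) ^ 2) ^ 2 = 33 * (k + 1) ^ 4 := by ring
      _ ≤ (n + k + 1) ^ 4 := h4
      _ = ((n + k + 1) * (n + k + 1)) ^ 2 := by ring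
      _ ≤ ((n + k + 1) * (n + k + 2)) ^ 2 := by gcongr; omega

/-- `33^n = O(a n)`: there is a constant `K > 0` with `33^n ≤ K * a n` for all
sufficiently large `n`. -/
theorem pow33_bigO_a :
    ∃ K : ℝ, 0 < K ∧ ∀ᶠ n : ℕ in Filter.atTop, (33 : ℝ) ^ n ≤ K * aseq n := by
  have hT0 : (0 : ℝ) < peakTerm 151 ^ 2 := by have := peakTerm_pos 151; positivity
  refine ⟨33 ^ 151 / peakTerm 151 ^ 2, by positivity,
    Filter.eventually_atTop.2 ⟨151, fun n hn => ?_⟩⟩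
  have hgrowth : 33 ^ (n - 151) * peakTerm 151 ^ 2 ≤ peakTerm n ^ 2 :=
    Nat.pow_mul_le_of_mul_le_succ (u := fun n => peakTerm n ^ 2)
      (fun _ hm => thirtyThree_mul_sq_peakTerm_le hm) hn
  rw [div_mul_eq_mul_div, le_div_iff₀ hT0]
  calc (33 : ℝ) ^ n * peakTerm 151 ^ 2
      = 33 ^ 151 * ((33 ^ (n - 151) * peakTerm 151 ^ 2 : ℕ) : ℝ) := by
        push_cast; rw [← mul_assoc, ← pow_add, Nat.add_sub_cancel' hn]
    _ ≤ 33 ^ 151 * (peakTerm n : ℝ) ^ 2 := by gcongr; exact_mod_cast hgrowth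
    _ ≤ 33 ^ 151 * aseq n := by gcongr; exact sq_aperyTerm_le_aseq (peakIndex_le n)
end

section
/- The sequence ρ_n = a_{n+1}/a_n is increasing for n ≥ 2. -/
/-- `ρ n = a (n+1) / a n`. -/
noncomputable def rho (n : ℕ) : ℝ := aseq (n + 1) / aseq n

/-!
Summing the Wilf–Zeilberger telescoping identity over `k` gives Apéry's recurrence
`(n+2)³ a(n+2) = P(n) a(n+1) - (n+1)³ a n` with `P(x) = (2x+3)(17x²+51x+39)`. Dividing by `a(n+1)`,
`ρ(n+1) = (P(n) - (n+1)³ / ρ n) / (n+2)³`. The right side is increasing in `ρ n`, and for `ρ n ≥ 1`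
it does not decrease when `n` is replaced by `n+1`. Since `a` is increasing, `ρ ≥ 1`, so
`ρ 0 < ρ 1` propagates to `ρ n < ρ (n+1)` for every `n`.
-/

open Finset

namespace Nat

theorem cast_choose_mul_succ_eq {R : Type*} [CommRing R] (n k : ℕ) :
    (n.choose k : R) * (n + 1) = ((n + 1).choose k : R) * (n + 1 - k) := by
  rcases le_or_gt k (n + 1) with hk | hk
  · have h := congrArg (Nat.cast (R := R)) (Nat.choose_mul_succ_eq n k)
    push_cast [Nat.cast_sub hk] at h
    linear_combination h
  · simp [Nat.choose_eq_zero_of_lt hk, Nat.choose_eq_zero_of_lt (show n < k by omega)]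

theorem cast_choose_succ_right_eq {R : Type*} [CommRing R] (n k : ℕ) :
    (n.choose (k + 1) : R) * (k + 1) = (n.choose k : R) * (n - k) := by
  rcases le_or_gt k n with hk | hk
  · have h := congrArg (Nat.cast (R := R)) (Nat.choose_succ_right_eq n k)
    push_cast [Nat.cast_sub hk] at h
    exact h
  · simp [Nat.choose_eq_zero_of_lt hk, Nat.choose_eq_zero_of_lt (show n < k + 1 by omega)]

end Nat

noncomputable def aperyBinom (n k : ℕ) : ℝ := n.choose k * (n + k).choose k

lemma aperyBinom_eq_mul_succ_left (n k : ℕ) :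
    aperyBinom n k = (n + 1 - k) / (n + 1 + k) * aperyBinom (n + 1) k := by
  have h₁ := Nat.cast_choose_mul_succ_eq (R := ℝ) n k
  have h₂ := Nat.cast_choose_mul_succ_eq (R := ℝ) (n + k) k
  rw [div_mul_eq_mul_div, eq_div_iff (by positivity)]
  refine mul_left_cancel₀ (show (n : ℝ) + 1 ≠ 0 by positivity) ?_
  unfold aperyBinom
  rw [show n + 1 + k = n + k + 1 by omega]
  push_cast at h₂ ⊢
  linear_combination (n + 1) * ((n + k + 1).choose k : ℝ) * h₁ + (n + 1) * (n.choose k : ℝ) * h₂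

lemma aperyBinom_succ_right (n k : ℕ) :
    aperyBinom n (k + 1) = (n - k) * (n + k + 1) / (k + 1) ^ 2 * aperyBinom n k := by
  have h₁ := Nat.cast_choose_succ_right_eq (R := ℝ) n k
  have h₂ : ((n + k + 1 : ℕ) : ℝ) * (n + k).choose k = (n + k + 1).choose (k + 1) * (k + 1) := by
    exact_mod_cast Nat.add_one_mul_choose_eq (n + k) k
  rw [div_mul_eq_mul_div, eq_div_iff (by positivity)]
  unfold aperyBinom
  rw [show n + (k + 1) = n + k + 1 by omega]
  push_cast at h₂ ⊢
  linear_combination (k + 1) * ((n + k + 1).choose (k + 1) : ℝ) * h₁ - (n - k) * (n.choose k : ℝ) * h₂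

noncomputable def aperyPoly (x : ℝ) : ℝ := (2 * x + 3) * (17 * x ^ 2 + 51 * x + 39)

/-- The Wilf–Zeilberger certificate of Apéry's recurrence. -/
noncomputable def aperyCert (n k : ℕ) : ℝ :=
  4 * (2 * n + 3) * (k * (2 * k + 1) - (2 * n + 3) ^ 2) * aperyBinom (n + 1) k ^ 2

lemma aperyBinom_zero_right (n : ℕ) : aperyBinom n 0 = 1 := by simp [aperyBinom]

lemma aperyBinom_of_lt {n k : ℕ} (h : n < k) : aperyBinom n k = 0 := by
  simp [aperyBinom, Nat.choose_eq_zero_of_lt h]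

lemma aperyCert_zero (n : ℕ) :
    (n + 2) ^ 3 * aperyBinom (n + 2) 0 ^ 2 - aperyPoly n * aperyBinom (n + 1) 0 ^ 2
      + (n + 1) ^ 3 * aperyBinom n 0 ^ 2 = aperyCert n 0 := by
  simp only [aperyCert, aperyPoly, aperyBinom_zero_right]
  ring

/- Every term is rewritten as a rational multiple of `aperyBinom (n + 2) k`; the denominators
`n + 1 + k`, `n + 2 + k`, `(k + 1) ^ 2` never vanish, so no case split on `k` is needed. -/
lemma aperyCert_succ_sub (n k : ℕ) :
    (n + 2) ^ 3 * aperyBinom (n + 2) (k + 1) ^ 2 - aperyPoly n * aperyBinom (n + 1) (k + 1) ^ 2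
      + (n + 1) ^ 3 * aperyBinom n (k + 1) ^ 2 = aperyCert n (k + 1) - aperyCert n k := by
  simp only [aperyCert, aperyPoly, aperyBinom_succ_right _ k, aperyBinom_eq_mul_succ_left n k,
    aperyBinom_eq_mul_succ_left (n + 1) k]
  push_cast
  field_simp
  ring

lemma sum_range_succ_aperyCert (n N : ℕ) :
    ∑ k ∈ range (N + 1), ((n + 2) ^ 3 * aperyBinom (n + 2) k ^ 2
      - aperyPoly n * aperyBinom (n + 1) k ^ 2 + (n + 1) ^ 3 * aperyBinom n k ^ 2) =
      aperyCert n N := by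
  induction N with
  | zero => simpa using aperyCert_zero n
  | succ N ih => rw [sum_range_succ, ih, aperyCert_succ_sub]; ring

lemma aseq_eq_sum {n N : ℕ} (h : n < N) : aseq n = ∑ k ∈ range N, aperyBinom n k ^ 2 := by
  rw [aseq]
  simp only [aperyBinom, mul_pow]
  refine sum_subset (range_subset_range.2 h) fun k _ hk => ?_
  simp [Nat.choose_eq_zero_of_lt (show n < k by simpa using hk)]

theorem aseq_recurrence (n : ℕ) :
    (n + 2) ^ 3 * aseq (n + 2) = aperyPoly n * aseq (n + 1) - (n + 1) ^ 3 * aseq n := by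
  have h := sum_range_succ_aperyCert n (n + 2)
  rw [aperyCert, aperyBinom_of_lt (by omega), sum_add_distrib, sum_sub_distrib, ← mul_sum,
    ← mul_sum, ← mul_sum] at h
  rw [aseq_eq_sum (N := n + 3) (by omega), aseq_eq_sum (N := n + 3) (by omega),
    aseq_eq_sum (N := n + 3) (by omega)]
  linear_combination h

lemma aseq_monotone : Monotone aseq := by
  refine monotone_nat_of_le_succ fun n => ?_
  rw [aseq_eq_sum (show n < n + 2 by omega), aseq_eq_sum (show n + 1 < n + 2 by omega)]
  refine sum_le_sum fun k _ => ?_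
  unfold aperyBinom
  gcongr <;> omega

lemma sq_lt_mul_of_apery_step {x A B C D : ℝ} (hx : 0 ≤ x) (hB : 0 < B) (hBC : B ≤ C)
    (h₁ : (x + 2) ^ 3 * C = aperyPoly x * B - (x + 1) ^ 3 * A)
    (h₂ : (x + 3) ^ 3 * D = aperyPoly (x + 1) * C - (x + 2) ^ 3 * B)
    (hABC : B ^ 2 < A * C) : C ^ 2 < B * D := by
  set K₁ := (x + 3) ^ 3 * aperyPoly x - (x + 2) ^ 3 * aperyPoly (x + 1)
  set K₂ := (x + 3) ^ 3 * (x + 1) ^ 3 - (x + 2) ^ 6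
  have hK₂ : K₂ ≤ 0 := by
    have : K₂ = -(3 * x ^ 4 + 24 * x ^ 3 + 69 * x ^ 2 + 84 * x + 37) := by ring
    rw [this, neg_nonpos]
    positivity
  have hK₁₂ : K₁ ≤ K₂ := by
    have : K₂ - K₁ = 48 * x ^ 4 + 432 * x ^ 3 + 1428 * x ^ 2 + 2052 * x + 1084 := by
      simp only [K₁, K₂, aperyPoly]; ring
    rw [← sub_nonneg, this]
    positivity
  have hK : K₁ * (B * C) ≤ K₂ * B ^ 2 := by
    have hBB : B ^ 2 ≤ B * C := by rw [sq]; exact mul_le_mul_of_nonneg_left hBC hB.le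
    calc K₁ * (B * C) ≤ K₁ * B ^ 2 := mul_le_mul_of_nonpos_left hBB (hK₁₂.trans hK₂)
      _ ≤ K₂ * B ^ 2 := by gcongr
  have e : (x + 2) ^ 3 * (x + 3) ^ 3 * (B * D - C ^ 2)
      = (x + 1) ^ 3 * (x + 3) ^ 3 * (A * C - B ^ 2) + (K₂ * B ^ 2 - K₁ * (B * C)) := by
    simp only [K₁, K₂]
    linear_combination (x + 2) ^ 3 * B * h₂ - (x + 3) ^ 3 * C * h₁
  have hpos : 0 < (x + 2) ^ 3 * (x + 3) ^ 3 * (B * D - C ^ 2) := by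
    rw [e]
    have : 0 < (x + 1) ^ 3 * (x + 3) ^ 3 * (A * C - B ^ 2) := by
      have := sub_pos.2 hABC
      positivity
    linarith
  exact sub_pos.1 (pos_of_mul_pos_right hpos (by positivity))

theorem strictMono_ratio_of_apery {u : ℕ → ℝ}
    (hrec : ∀ n : ℕ, (n + 2) ^ 3 * u (n + 2) = aperyPoly n * u (n + 1) - (n + 1) ^ 3 * u n)
    (hpos : 0 < u 0) (hmono : Monotone u) (h₀ : u 1 ^ 2 < u 0 * u 2) :
    StrictMono fun n => u (n + 1) / u n := by
  have hu : ∀ n, 0 < u n := fun n => hpos.trans_le (hmono n.zero_le)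
  have hconv : ∀ n, u (n + 1) ^ 2 < u n * u (n + 2) := by
    intro n
    induction n with
    | zero => exact h₀
    | succ n ih =>
      have h₂ := hrec (n + 1)
      push_cast at h₂
      exact sq_lt_mul_of_apery_step n.cast_nonneg (hu _) (hmono n.succ.le_succ) (hrec n)
        (by linear_combination h₂) ih
  refine strictMono_nat_of_lt_succ fun n => ?_
  rw [div_lt_div_iff₀ (hu n) (hu (n + 1)), ← sq, mul_comm]
  exact hconv n

/-- The sequence `ρ n = a (n+1) / a n` is increasing for `n ≥ 2`. -/
theorem rho_increasing : StrictMonoOn rho {n : ℕ | 2 ≤ n} := by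
  have h₀ : aseq 1 ^ 2 < aseq 0 * aseq 2 := by
    norm_num [aseq, sum_range_succ, Nat.choose]
  have hpos : 0 < aseq 0 := by norm_num [aseq]
  exact (strictMono_ratio_of_apery aseq_recurrence hpos aseq_monotone h₀).strictMonoOn _
end
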